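/- Let T ≥ 0 and V be random variables, C a random variable independent of the pair (T, V), and set Y = min(T, C), Δ = 1{T ≤ C}, and S(t) = P(C ≥ t). Assume S(T) > 0 almost surely. Then for any measurable bounded function g : ℝ × ℝ → ℝ, E[ (Δ / S(Y)) · g(Y, V) ] = E[ g(T, V) ]. -/

import Mathlib

/-! On the event `T ≤ C` we have `Y = T`, so the weighted integrand is `1{T ≤ C} g(T, V) / S(T)`.
Since `C` is independent of `(T, V)`, the joint law is a product and Fubini lets us integrate out
`C` first: this replaces `1{T ≤ C}` by `P(T ≤ C) = S(T)`, which cancels the weight wherever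
`S(T) > 0`, i.e. almost surely. -/

open MeasureTheory ProbabilityTheory Set

section

variable {Ω β : Type*} [MeasurableSpace Ω] [MeasurableSpace β]

lemma measurable_measureReal_setOf_le (P : Measure Ω) [IsFiniteMeasure P] (C : Ω → ℝ) :
    Measurable fun t => P.real {ω | t ≤ C ω} :=
  Antitone.measurable fun _ _ hab => measureReal_mono fun _ h => hab.trans h

lemma measurable_ite_le_fst {τ f : β → ℝ} (hτ : Measurable τ) (hf : Measurable f) :
    Measurable fun p : ℝ × β => if τ p.2 ≤ p.1 then f p.2 else 0 :=
  Measurable.ite (measurableSet_le (hτ.comp measurable_snd) measurable_fst)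
    (hf.comp measurable_snd) measurable_const

lemma integral_prod_ite_le {μ : Measure ℝ} [IsFiniteMeasure μ] {ν : Measure β} [SFinite ν]
    {τ f : β → ℝ} (hτ : Measurable τ) (hf : Measurable f)
    (hint : Integrable (fun w => μ.real (Ici (τ w)) * f w) ν) :
    ∫ p, (if τ p.2 ≤ p.1 then f p.2 else 0) ∂(μ.prod ν) = ∫ w, μ.real (Ici (τ w)) * f w ∂ν := by
  have slice : ∀ w c, (if τ w ≤ c then f w else 0) = (Ici (τ w)).indicator (fun _ => f w) c :=
    fun w c => by by_cases h : τ w ≤ c <;> simp [h]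
  have hprod : Integrable (fun p : ℝ × β => if τ p.2 ≤ p.1 then f p.2 else 0) (μ.prod ν) := by
    refine (integrable_prod_iff' (measurable_ite_le_fst hτ hf).aestronglyMeasurable).2 ⟨?_, ?_⟩
    · refine .of_forall fun w => ?_
      simpa only [slice w] using (integrable_const (f w)).indicator measurableSet_Ici
    · refine hint.norm.congr (.of_forall fun w => ?_)
      simp only [slice w, norm_indicator_eq_indicator_norm]
      rw [integral_indicator_const _ measurableSet_Ici, smul_eq_mul, norm_mul,
        Real.norm_of_nonneg measureReal_nonneg]
  rw [integral_prod_symm _ hprod]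
  refine integral_congr_ae (.of_forall fun w => ?_)
  simp only [slice w]
  rw [integral_indicator_const _ measurableSet_Ici, smul_eq_mul]

lemma ProbabilityTheory.IndepFun.integral_ite_le {P : Measure Ω} [IsFiniteMeasure P]
    {C : Ω → ℝ} {W : Ω → β} (hC : Measurable C) (hW : Measurable W) (hindep : IndepFun C W P)
    {τ f : β → ℝ} (hτ : Measurable τ) (hf : Measurable f)
    (hint : Integrable (fun ω => P.real {ω' | τ (W ω) ≤ C ω'} * f (W ω)) P) :
    ∫ ω, (if τ (W ω) ≤ C ω then f (W ω) else 0) ∂P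
      = ∫ ω, P.real {ω' | τ (W ω) ≤ C ω'} * f (W ω) ∂P := by
  have hS : ∀ t, (P.map C).real (Ici t) = P.real {ω | t ≤ C ω} :=
    fun t => map_measureReal_apply hC measurableSet_Ici
  have hSf : Measurable fun w => P.real {ω | τ w ≤ C ω} * f w :=
    ((measurable_measureReal_setOf_le P C).comp hτ).mul hf
  calc ∫ ω, (if τ (W ω) ≤ C ω then f (W ω) else 0) ∂P
      = ∫ p, (if τ p.2 ≤ p.1 then f p.2 else 0) ∂(P.map fun ω => (C ω, W ω)) :=
        (integral_map (hC.prodMk hW).aemeasurable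
          (measurable_ite_le_fst hτ hf).aestronglyMeasurable).symm
    _ = ∫ p, (if τ p.2 ≤ p.1 then f p.2 else 0) ∂((P.map C).prod (P.map W)) := by
        rw [hindep.map_prod_eq_prod_map_map hC.aemeasurable hW.aemeasurable]
    _ = ∫ w, P.real {ω | τ w ≤ C ω} * f w ∂(P.map W) := by
        simp_rw [← hS]
        refine integral_prod_ite_le hτ hf ?_
        simpa only [hS] using
          (integrable_map_measure hSf.aestronglyMeasurable hW.aemeasurable).2 hint
    _ = ∫ ω, P.real {ω' | τ (W ω) ≤ C ω'} * f (W ω) ∂P :=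
        integral_map hW.aemeasurable hSf.aestronglyMeasurable

end

theorem stmt1_general {Ω : Type*} [MeasurableSpace Ω] (P : Measure Ω) [IsProbabilityMeasure P]
    (T V C : Ω → ℝ) (hT : Measurable T) (hV : Measurable V) (hC : Measurable C)
    (hindep : IndepFun C (fun ω => (T ω, V ω)) P)
    (S : ℝ → ℝ) (hS : ∀ t, S t = (P {ω | t ≤ C ω}).toReal)
    (hSpos : ∀ᵐ ω ∂P, 0 < S (T ω))
    (g : ℝ × ℝ → ℝ) (hg : Measurable g) (M : ℝ) (hbd : ∀ x, |g x| ≤ M) :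
    (∫ ω, ((if T ω ≤ C ω then (1 : ℝ) else 0) / S (min (T ω) (C ω)))
        * g (min (T ω) (C ω), V ω) ∂P)
      = ∫ ω, g (T ω, V ω) ∂P := by
  have hS' : ∀ t, P.real {ω | t ≤ C ω} = S t := fun t => (hS t).symm
  have hSmeas : Measurable S := by
    simpa only [hS'] using measurable_measureReal_setOf_le P C
  have hgTV : Integrable (fun ω => g (T ω, V ω)) P :=
    .of_bound (hg.comp (hT.prodMk hV)).aestronglyMeasurable M (.of_forall fun _ => hbd _)
  have hcancel : (fun ω => S (T ω) * (g (T ω, V ω) / S (T ω))) =ᵐ[P] fun ω => g (T ω, V ω) := by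
    filter_upwards [hSpos] with ω h
    exact mul_div_cancel₀ _ h.ne'
  have hfubini := hindep.integral_ite_le hC (hT.prodMk hV) measurable_fst
    (hg.div (hSmeas.comp measurable_fst)) (f := fun w => g w / S w.1)
  simp only [hS'] at hfubini
  calc _ = ∫ ω, (if T ω ≤ C ω then g (T ω, V ω) / S (T ω) else 0) ∂P := by
        refine integral_congr_ae (.of_forall fun ω => ?_)
        by_cases h : T ω ≤ C ω <;> simp [h, inv_mul_eq_div]
    _ = ∫ ω, S (T ω) * (g (T ω, V ω) / S (T ω)) ∂P := hfubini (hgTV.congr hcancel.symm)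
    _ = ∫ ω, g (T ω, V ω) ∂P := integral_congr_ae hcancel

theorem stmt1 {Ω : Type*} [MeasurableSpace Ω] (P : Measure Ω) [IsProbabilityMeasure P]
    (T V C : Ω → ℝ) (hT : Measurable T) (hV : Measurable V) (hC : Measurable C)
    (hTnn : ∀ ω, 0 ≤ T ω)
    (hindep : IndepFun C (fun ω => (T ω, V ω)) P)
    (S : ℝ → ℝ) (hS : ∀ t, S t = (P {ω | t ≤ C ω}).toReal)
    (hSpos : ∀ᵐ ω ∂P, 0 < S (T ω))
    (g : ℝ × ℝ → ℝ) (hg : Measurable g) (M : ℝ) (hbd : ∀ x, |g x| ≤ M) :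
    (∫ ω, ((if T ω ≤ C ω then (1 : ℝ) else 0) / S (min (T ω) (C ω)))
        * g (min (T ω) (C ω), V ω) ∂P)
      = ∫ ω, g (T ω, V ω) ∂P :=
  stmt1_general P T V C hT hV hC hindep S hS hSpos g hg M hbd
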